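/- In a normed category (K, K⁰) with the almost amalgamation property, for all compatible K⁰-arrows f, g: (N₁) μ(f∘g) ≤ μ(f) + μ(g), and (N₂) μ(g) ≤ μ(f) + μ(f∘g). -/

import Mathlib

open CategoryTheory

universe u v

/-- A category enriched over metric spaces: each hom-set carries an (extended) metric `ρ`
such that composition is non-expansive on both sides. -/
structure MetricEnrichment (C : Type u) [Category.{v} C] where
  ρ : ∀ {a b : C}, (a ⟶ b) → (a ⟶ b) → ENNReal
  ρ_self : ∀ {a b : C} (f : a ⟶ b), ρ f f = 0
  eq_of_ρ_eq_zero : ∀ {a b : C} {f g : a ⟶ b}, ρ f g = 0 → f = g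
  ρ_comm : ∀ {a b : C} (f g : a ⟶ b), ρ f g = ρ g f
  ρ_triangle : ∀ {a b : C} (f g h : a ⟶ b), ρ f h ≤ ρ f g + ρ g h
  precomp_nonexpansive : ∀ {a b c : C} (g : a ⟶ b) (f₀ f₁ : b ⟶ c),
    ρ (g ≫ f₀) (g ≫ f₁) ≤ ρ f₀ f₁
  postcomp_nonexpansive : ∀ {a b c : C} (f₀ f₁ : a ⟶ b) (h : b ⟶ c),
    ρ (f₀ ≫ h) (f₁ ≫ h) ≤ ρ f₀ f₁

/-- A (wide) subcategory with the same objects, given by a class of arrows containing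
identities and closed under composition. -/
structure WideSubcat (C : Type u) [Category.{v} C] where
  mem : ∀ {a b : C}, (a ⟶ b) → Prop
  id_mem : ∀ a : C, mem (𝟙 a)
  comp_mem : ∀ {a b c : C} {f : a ⟶ b} {g : b ⟶ c}, mem f → mem g → mem (f ≫ g)

/-- The norm `μ(f) = inf { ρ(j ∘ f, i) : i, j ∈ K compatible }` of an arrow of the big
category, induced by the pair (K, K⁰). -/
noncomputable def normOf {C : Type u} [Category.{v} C] (M : MetricEnrichment C)
    (K : WideSubcat C) {a b : C} (f : a ⟶ b) : ENNReal :=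
  ⨅ (c : C) (i : a ⟶ c) (j : b ⟶ c) (_ : K.mem i) (_ : K.mem j), M.ρ (f ≫ j) i

/-- The almost amalgamation property of the subcategory `K`. -/
def AlmostAmalg {C : Type u} [Category.{v} C] (M : MetricEnrichment C)
    (K : WideSubcat C) : Prop :=
  ∀ {c a b : C} (f : c ⟶ a) (g : c ⟶ b), K.mem f → K.mem g →
    ∀ ε : ENNReal, 0 < ε →
      ∃ (w : C) (f' : a ⟶ w) (g' : b ⟶ w), K.mem f' ∧ K.mem g' ∧
        M.ρ (f ≫ f') (g ≫ g') < ε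

/-!
Both inequalities come from gluing witnesses. Given near-optimal pairs `(i, j)` for `f` and
`(i', j')` for `g` (resp. for `g ≫ f`), almost amalgamate the two `K`-arrows that leave the
common object; pushing both witnesses forward along the amalgam produces a pair for `g ≫ f`
(resp. for `g`) whose defect is, by the triangle inequality and non-expansiveness of
composition, at most the sum of the two defects plus the amalgamation error `δ`, and `δ` is
arbitrary.
-/

namespace MetricEnrichment

variable {C : Type u} [Category.{v} C] (M : MetricEnrichment C)

lemma ρ_comp_comp_le {a b c d : C} (h : a ⟶ b) (f₀ f₁ : b ⟶ c) (k : c ⟶ d) :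
    M.ρ (h ≫ f₀ ≫ k) (h ≫ f₁ ≫ k) ≤ M.ρ f₀ f₁ :=
  (M.precomp_nonexpansive h _ _).trans (M.postcomp_nonexpansive f₀ f₁ k)

lemma ρ_triangle₃ {a b : C} (f₀ f₁ f₂ f₃ : a ⟶ b) :
    M.ρ f₀ f₃ ≤ M.ρ f₀ f₁ + M.ρ f₁ f₂ + M.ρ f₂ f₃ :=
  calc M.ρ f₀ f₃ ≤ M.ρ f₀ f₂ + M.ρ f₂ f₃ := M.ρ_triangle _ _ _
    _ ≤ M.ρ f₀ f₁ + M.ρ f₁ f₂ + M.ρ f₂ f₃ := by gcongr; exact M.ρ_triangle _ _ _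

end MetricEnrichment

section Norm

variable {C : Type u} [Category.{v} C] (M : MetricEnrichment C) (K : WideSubcat C)

lemma normOf_le {a b d : C} (f : a ⟶ b) {i : a ⟶ d} {j : b ⟶ d} (hi : K.mem i) (hj : K.mem j) :
    normOf M K f ≤ M.ρ (f ≫ j) i :=
  iInf_le_of_le d (iInf_le_of_le i (iInf_le_of_le j (iInf_le_of_le hi (iInf_le _ hj))))

lemma le_normOf_add_normOf {a b a' b' : C} (f : a ⟶ b) (g : a' ⟶ b') {x : ENNReal}
    (h : ∀ {d e : C} (i : a ⟶ d) (j : b ⟶ d) (i' : a' ⟶ e) (j' : b' ⟶ e),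
      K.mem i → K.mem j → K.mem i' → K.mem j' →
      ∀ δ : ENNReal, 0 < δ → x ≤ M.ρ (f ≫ j) i + δ + M.ρ (g ≫ j') i') :
    x ≤ normOf M K f + normOf M K g := by
  simp only [normOf, ENNReal.iInf_add, ENNReal.add_iInf, le_iInf_iff]
  intro e i' j' hi' hj' d i j hi hj
  refine ENNReal.le_of_forall_pos_le_add fun δ hδ _ => ?_
  exact (h i j i' j' hi hj hi' hj' δ (ENNReal.coe_pos.mpr hδ)).trans_eq (add_right_comm _ _ _)

variable {M K}

theorem normOf_comp_le (amalg : AlmostAmalg M K) {a b c : C} (g : a ⟶ b) (f : b ⟶ c) :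
    normOf M K (g ≫ f) ≤ normOf M K f + normOf M K g := by
  refine le_normOf_add_normOf M K f g fun i j i' j' hi hj hi' hj' δ hδ => ?_
  obtain ⟨w, i'', j'', hi'', hj'', hamalg⟩ := amalg j' i hj' hi δ hδ
  calc normOf M K (g ≫ f)
      ≤ M.ρ ((g ≫ f) ≫ j ≫ j'') (i' ≫ i'') :=
        normOf_le M K _ (K.comp_mem hi' hi'') (K.comp_mem hj hj'')
    _ = M.ρ (g ≫ (f ≫ j) ≫ j'') (i' ≫ i'') := by simp only [Category.assoc]
    _ ≤ M.ρ (g ≫ (f ≫ j) ≫ j'') (g ≫ i ≫ j'') + M.ρ (g ≫ i ≫ j'') (g ≫ j' ≫ i'')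
          + M.ρ (g ≫ j' ≫ i'') (i' ≫ i'') := M.ρ_triangle₃ _ _ _ _
    _ ≤ M.ρ (f ≫ j) i + δ + M.ρ (g ≫ j') i' := by
        gcongr
        · exact M.ρ_comp_comp_le g _ _ j''
        · calc M.ρ (g ≫ i ≫ j'') (g ≫ j' ≫ i'')
              ≤ M.ρ (i ≫ j'') (j' ≫ i'') := M.precomp_nonexpansive _ _ _
            _ = M.ρ (j' ≫ i'') (i ≫ j'') := M.ρ_comm _ _
            _ ≤ δ := hamalg.le
        · simpa only [Category.assoc] using M.postcomp_nonexpansive (g ≫ j') i' i''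

theorem normOf_le_normOf_comp (amalg : AlmostAmalg M K) {a b c : C} (g : a ⟶ b) (f : b ⟶ c) :
    normOf M K g ≤ normOf M K f + normOf M K (g ≫ f) := by
  refine le_normOf_add_normOf M K f (g ≫ f) fun i j i' j' hi hj hi' hj' δ hδ => ?_
  obtain ⟨w, j'', j''', hj'', hj''', hamalg⟩ := amalg j j' hj hj' δ hδ
  calc normOf M K g
      ≤ M.ρ (g ≫ i ≫ j'') (i' ≫ j''') :=
        normOf_le M K _ (K.comp_mem hi' hj''') (K.comp_mem hi hj'')
    _ ≤ M.ρ (g ≫ i ≫ j'') (g ≫ (f ≫ j) ≫ j'') + M.ρ (g ≫ f ≫ j ≫ j'') (g ≫ f ≫ j' ≫ j''')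
          + M.ρ (g ≫ f ≫ j' ≫ j''') (i' ≫ j''') := by
        simpa only [Category.assoc] using M.ρ_triangle₃ _ _ _ _
    _ ≤ M.ρ (f ≫ j) i + δ + M.ρ ((g ≫ f) ≫ j') i' := by
        gcongr
        · rw [M.ρ_comm]
          exact M.ρ_comp_comp_le g _ _ j''
        · simpa only [Category.assoc] using
            (M.precomp_nonexpansive (g ≫ f) _ _).trans hamalg.le
        · simpa only [Category.assoc] using M.postcomp_nonexpansive ((g ≫ f) ≫ j') i' j'''

end Norm

/-- In a normed category with the almost amalgamation property the norm satisfies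
`(N₁) μ(f∘g) ≤ μ(f) + μ(g)` and `(N₂) μ(g) ≤ μ(f) + μ(f∘g)` for compatible arrows. -/
theorem stmt6 {C : Type u} [Category.{v} C] (M : MetricEnrichment C) (K : WideSubcat C)
    (amalg : AlmostAmalg M K) {a b c : C} (g : a ⟶ b) (f : b ⟶ c) :
    normOf M K (g ≫ f) ≤ normOf M K f + normOf M K g ∧
    normOf M K g ≤ normOf M K f + normOf M K (g ≫ f) :=
  ⟨normOf_comp_le amalg g f, normOf_le_normOf_comp amalg g f⟩
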